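/- arXiv:1208.2704 — 5 statements merged into one kernel-verified Lean document; each statement's English description precedes it below -/
import Mathlib

section
/- Let V₁ = [[A, B],[C, D]] be a block (1+n)×(1+n) complex matrix (A a scalar) satisfying V₁* J V₁ = J, where J = diag(1, J₁) and J₁ is a signature matrix on ℂ^n. Define φ(λ) = A + λ B (I - λ D)^{-1} C for λ with I - λD invertible. Then 1 - |φ(λ)|² = (1 - |λ|²) C* (I - λ̄ D*)^{-1} J₁ (I - λ D)^{-1} C. -/
open scoped Matrix

/-!
With `y = (1 - λD)⁻¹ C` one has `C + λ D y = y`, so the colligation `V = [[A, B], [C, D]]` maps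
`[1; λ y]` to `[φ(λ); y]`. Since `V` preserves the form `J = diag(1, J₁)`, comparing the two
values of the form gives `1 + |λ|² y* J₁ y = φ(λ)* φ(λ) + y* J₁ y`, which is the identity.
-/

namespace Matrix

variable {m n k α : Type*} [CommRing α]

noncomputable def transferFunction [Fintype k] [DecidableEq k] (A : Matrix m m α)
    (B : Matrix m k α) (C : Matrix k m α) (D : Matrix k k α) (l : α) : Matrix m m α :=
  A + l • (B * (1 - l • D)⁻¹ * C)

lemma conjTranspose_fromRows_mul_fromBlocks_mul_fromRows [Fintype m] [DecidableEq m] [Fintype k]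
    [StarRing α] (J : Matrix k k α) (X : Matrix m n α) (Y : Matrix k n α) :
    (fromRows X Y)ᴴ * fromBlocks (1 : Matrix m m α) 0 0 J * fromRows X Y =
      Xᴴ * X + Yᴴ * J * Y := by
  rw [conjTranspose_fromRows_eq_fromCols_conjTranspose, fromCols_mul_fromBlocks,
    fromCols_mul_fromRows]
  simp

lemma inv_one_sub_smul_eq_one_add_smul_mul_inv [Fintype k] [DecidableEq k]
    {D : Matrix k k α} {l : α} (hl : IsUnit (1 - l • D)) :
    (1 - l • D)⁻¹ = 1 + l • (D * (1 - l • D)⁻¹) := by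
  have h := mul_nonsing_inv _ ((isUnit_iff_isUnit_det _).mp hl)
  rw [sub_mul, Matrix.one_mul, smul_mul] at h
  exact sub_eq_iff_eq_add.mp h

theorem one_sub_conjTranspose_transferFunction_mul_self [Fintype m] [DecidableEq m] [Fintype k]
    [DecidableEq k] [StarRing α] (J : Matrix k k α)
    (A : Matrix m m α) (B : Matrix m k α) (C : Matrix k m α) (D : Matrix k k α)
    (hV : (fromBlocks A B C D)ᴴ * fromBlocks 1 0 0 J * fromBlocks A B C D = fromBlocks 1 0 0 J)
    {l : α} (hl : IsUnit (1 - l • D)) :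
    1 - (transferFunction A B C D l)ᴴ * transferFunction A B C D l =
      (1 - l * star l) • (Cᴴ * (1 - star l • Dᴴ)⁻¹ * J * (1 - l • D)⁻¹ * C) := by
  set φ := transferFunction A B C D l
  set y := (1 - l • D)⁻¹ * C
  set u := fromRows (1 : Matrix m m α) (l • y)
  set 𝒥 := fromBlocks (1 : Matrix m m α) 0 0 J
  have hy_fix : y = C + l • (D * y) := calc
    y = (1 + l • (D * (1 - l • D)⁻¹)) * C := by
      rw [← inv_one_sub_smul_eq_one_add_smul_mul_inv hl]
    _ = C + l • (D * y) := by rw [Matrix.add_mul, Matrix.one_mul, smul_mul, Matrix.mul_assoc]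
  have hVu : fromBlocks A B C D * u = fromRows φ y := by
    rw [fromBlocks_mul_fromRows, Matrix.mul_one, Matrix.mul_one, Matrix.mul_smul,
      Matrix.mul_smul, ← hy_fix]
    simp only [φ, transferFunction, y, Matrix.mul_assoc]
  have hiso : (fromRows φ y)ᴴ * 𝒥 * fromRows φ y = uᴴ * 𝒥 * u := by
    conv_rhs => rw [← hV]
    simp only [← hVu, conjTranspose_mul, Matrix.mul_assoc]
  rw [conjTranspose_fromRows_mul_fromBlocks_mul_fromRows,
    conjTranspose_fromRows_mul_fromBlocks_mul_fromRows] at hiso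
  have hy_star : yᴴ = Cᴴ * (1 - star l • Dᴴ)⁻¹ := by
    simp [y, conjTranspose_nonsing_inv, conjTranspose_sub]
  have hform : Cᴴ * (1 - star l • Dᴴ)⁻¹ * J * (1 - l • D)⁻¹ * C = yᴴ * J * y := by
    rw [hy_star, Matrix.mul_assoc _ _ C]
  simp only [conjTranspose_one, Matrix.one_mul, conjTranspose_smul, smul_mul, Matrix.mul_smul,
    smul_smul] at hiso
  rw [hform, sub_smul, one_smul, sub_eq_sub_iff_add_eq_add, ← hiso, add_comm]

end Matrix

theorem stmt4_general {n : ℕ} (J₁ : Matrix (Fin n) (Fin n) ℂ)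
    (A : ℂ) (B : Matrix (Fin 1) (Fin n) ℂ) (C : Matrix (Fin n) (Fin 1) ℂ)
    (D : Matrix (Fin n) (Fin n) ℂ)
    (hV : (Matrix.fromBlocks (Matrix.of fun _ _ => A) B C D)ᴴ *
            (Matrix.fromBlocks 1 0 0 J₁) *
            (Matrix.fromBlocks (Matrix.of fun _ _ => A) B C D) = Matrix.fromBlocks 1 0 0 J₁)
    (φ : ℂ → ℂ) (hφ : ∀ l : ℂ, φ l = A + l * (B * (1 - l • D)⁻¹ * C) 0 0) :
    ∀ l : ℂ, IsUnit (1 - l • D) →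
      (1 : ℂ) - φ l * star (φ l) =
        (1 - l * star l) *
          ((Cᴴ * (1 - star l • Dᴴ)⁻¹ * J₁ * (1 - l • D)⁻¹ * C) 0 0) := by
  intro l hl
  have hφl : φ l = Matrix.transferFunction (Matrix.of fun _ _ => A) B C D l 0 0 := by
    simp [hφ, Matrix.transferFunction]
  have key := congrFun (congrFun
    (Matrix.one_sub_conjTranspose_transferFunction_mul_self J₁ _ B C D hV hl) 0) 0
  rw [Matrix.sub_apply, Matrix.one_apply_eq, Matrix.mul_apply, Fin.sum_univ_one,
    Matrix.conjTranspose_apply, Matrix.smul_apply, smul_eq_mul] at key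
  rw [hφl, mul_comm, key]

/-- if V₁ = [[A,B],[C,D]] satisfies V₁* J V₁ = J with J = diag(1,J₁),
J₁ a signature matrix, and φ(λ) = A + λB(I-λD)⁻¹C, then
1 - |φ(λ)|² = (1-|λ|²) C*(I-λ̄D*)⁻¹ J₁ (I-λD)⁻¹ C. -/
theorem stmt4 {n : ℕ} (J₁ : Matrix (Fin n) (Fin n) ℂ) (hJ₁ : J₁.IsHermitian)
    (hJ₁sq : J₁ * J₁ = 1)
    (A : ℂ) (B : Matrix (Fin 1) (Fin n) ℂ) (C : Matrix (Fin n) (Fin 1) ℂ)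
    (D : Matrix (Fin n) (Fin n) ℂ)
    (hV : (Matrix.fromBlocks (Matrix.of fun _ _ => A) B C D)ᴴ *
            (Matrix.fromBlocks 1 0 0 J₁) *
            (Matrix.fromBlocks (Matrix.of fun _ _ => A) B C D) = Matrix.fromBlocks 1 0 0 J₁)
    (φ : ℂ → ℂ) (hφ : ∀ l : ℂ, φ l = A + l * (B * (1 - l • D)⁻¹ * C) 0 0) :
    ∀ l : ℂ, IsUnit (1 - l • D) →
      (1 : ℂ) - φ l * star (φ l) =
        (1 - l * star l) *
          ((Cᴴ * (1 - star l • Dᴴ)⁻¹ * J₁ * (1 - l • D)⁻¹ * C) 0 0) :=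
  stmt4_general J₁ A B C D hV φ hφ
end

section
/- With the same transfer-function setup, for any λ, μ with I - λD and I - μD invertible, setting x(λ) = (I - λD)^{-1} C, one has (1 - φ(λ) conj(φ(μ)))/(1 - λ conj(μ)) = ⟨J₁ x(λ), x(μ)⟩ whenever λ conj(μ) ≠ 1. -/
open scoped Matrix

/-!
Put `u(λ) = [1; λ x(λ)]`. Since `(I - λD) x(λ) = C`, the colligation maps it to
`V u(λ) = [φ(λ); x(λ)]`. As `V` preserves the indefinite form `J`,
`⟨J V u(λ), V u(μ)⟩ = ⟨J u(λ), u(μ)⟩`, which reads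
`conj φ(μ) φ(λ) + x(μ)* J₁ x(λ) = 1 + conj μ λ x(μ)* J₁ x(λ)`.
-/

namespace Matrix

variable {R : Type*} {k m n : Type*} [Fintype m] [Fintype n]

theorem conjTranspose_mul_mul_mul_eq_of_conjTranspose_mul_mul_eq
    [Semiring R] [StarRing R] {V J : Matrix n n R} (hV : Vᴴ * J * V = J) (u w : Matrix n k R) :
    (V * u)ᴴ * J * (V * w) = uᴴ * J * w := by
  calc (V * u)ᴴ * J * (V * w) = uᴴ * (Vᴴ * J * V) * w := by
        simp only [conjTranspose_mul, Matrix.mul_assoc]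
    _ = uᴴ * J * w := by rw [hV]

theorem fromRows_conjTranspose_mul_fromBlocks_diag_mul_fromRows
    [Semiring R] [StarRing R] (J₀ : Matrix m m R) (J₁ : Matrix n n R)
    (p p' : Matrix m k R) (y y' : Matrix n k R) :
    (fromRows p y)ᴴ * fromBlocks J₀ 0 0 J₁ * fromRows p' y' = pᴴ * J₀ * p' + yᴴ * J₁ * y' := by
  rw [conjTranspose_fromRows_eq_fromCols_conjTranspose, fromCols_mul_fromBlocks,
    fromCols_mul_fromRows]
  simp

variable [CommRing R] [DecidableEq m] [DecidableEq n]

theorem fromBlocks_mul_fromRows_one_smul {a : Matrix m m R} {B : Matrix m n R}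
    {C : Matrix n m R} {D : Matrix n n R} {l : R} {x : Matrix n m R}
    (hx : (1 - l • D) * x = C) :
    fromBlocks a B C D * fromRows (1 : Matrix m m R) (l • x) = fromRows (a + l • (B * x)) x := by
  rw [fromBlocks_mul_fromRows, ← hx]
  simp only [Matrix.mul_one, Matrix.mul_smul, Matrix.sub_mul, Matrix.one_mul, Matrix.smul_mul,
    sub_add_cancel]

/-- `a + λ • (B * x)` with `(1 - λ • D) * x = C` is the transfer function
`a + λ B (I - λD)⁻¹ C`, written without inverses. -/
theorem one_sub_transfer_conjTranspose_mul_transfer [StarRing R] {a : Matrix m m R}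
    {B : Matrix m n R} {C : Matrix n m R} {D : Matrix n n R} {J₁ : Matrix n n R}
    (hV : (fromBlocks a B C D)ᴴ * fromBlocks 1 0 0 J₁ * fromBlocks a B C D = fromBlocks 1 0 0 J₁)
    {l μ : R} {xl xμ : Matrix n m R} (hxl : (1 - l • D) * xl = C) (hxμ : (1 - μ • D) * xμ = C) :
    1 - (a + μ • (B * xμ))ᴴ * (a + l • (B * xl)) = (1 - star μ * l) • (xμᴴ * J₁ * xl) := by
  have h := conjTranspose_mul_mul_mul_eq_of_conjTranspose_mul_mul_eq hV
    (fromRows (1 : Matrix m m R) (μ • xμ)) (fromRows (1 : Matrix m m R) (l • xl))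
  rw [fromBlocks_mul_fromRows_one_smul hxl, fromBlocks_mul_fromRows_one_smul hxμ,
    fromRows_conjTranspose_mul_fromBlocks_diag_mul_fromRows,
    fromRows_conjTranspose_mul_fromBlocks_diag_mul_fromRows] at h
  simp only [conjTranspose_one, Matrix.mul_one, conjTranspose_smul,
    Matrix.smul_mul, Matrix.mul_smul, smul_smul] at h
  rw [sub_smul, one_smul, mul_comm, sub_eq_sub_iff_add_eq_add, add_comm (xμᴴ * J₁ * xl), h]

end Matrix

theorem stmt5_general {n : ℕ} (J₁ : Matrix (Fin n) (Fin n) ℂ)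
    (A : ℂ) (B : Matrix (Fin 1) (Fin n) ℂ) (C : Matrix (Fin n) (Fin 1) ℂ)
    (D : Matrix (Fin n) (Fin n) ℂ)
    (hV : (Matrix.fromBlocks (Matrix.of fun _ _ => A) B C D)ᴴ *
            (Matrix.fromBlocks 1 0 0 J₁) *
            (Matrix.fromBlocks (Matrix.of fun _ _ => A) B C D) = Matrix.fromBlocks 1 0 0 J₁)
    (φ : ℂ → ℂ) (hφ : ∀ l : ℂ, φ l = A + l * (B * (1 - l • D)⁻¹ * C) 0 0)
    (x : ℂ → Matrix (Fin n) (Fin 1) ℂ) (hx : ∀ l : ℂ, x l = (1 - l • D)⁻¹ * C) :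
    ∀ l m : ℂ, IsUnit (1 - l • D) → IsUnit (1 - m • D) → l * star m ≠ 1 →
      ((1 : ℂ) - φ l * star (φ m)) / (1 - l * star m) = ((x m)ᴴ * J₁ * x l) 0 0 := by
  intro l m hl hm hlm
  have hcancel : ∀ z, IsUnit (1 - z • D) → (1 - z • D) * x z = C := fun z hz => by
    rw [hx, Matrix.mul_nonsing_inv_cancel_left _ _ ((Matrix.isUnit_iff_isUnit_det _).mp hz)]
  set Φ : ℂ → Matrix (Fin 1) (Fin 1) ℂ := fun z => Matrix.of (fun _ _ => A) + z • (B * x z)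
  have hφx : ∀ z, φ z = A + z * (B * x z) 0 0 := fun z => by rw [hφ, hx, Matrix.mul_assoc]
  have hΦ : ((Φ m)ᴴ * Φ l) 0 0 = star (φ m) * φ l := by
    have hΦφ : ∀ z, Φ z 0 0 = φ z := fun z => by simp [Φ, hφx]
    rw [Matrix.mul_apply, Fin.sum_univ_one, Matrix.conjTranspose_apply, hΦφ, hΦφ]
  have key := congrFun (congrFun
    (Matrix.one_sub_transfer_conjTranspose_mul_transfer hV (hcancel l hl) (hcancel m hm)) 0) 0
  rw [Matrix.sub_apply, Matrix.one_apply_eq, hΦ, Matrix.smul_apply, smul_eq_mul] at key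
  rw [div_eq_iff (sub_ne_zero.mpr hlm.symm)]
  linear_combination key

/-- with the same transfer-function setup, for x(λ) = (I-λD)⁻¹C one has
(1 - φ(λ) conj(φ(μ)))/(1 - λ conj(μ)) = ⟨J₁ x(λ), x(μ)⟩ = x(μ)* J₁ x(λ). -/
theorem stmt5 {n : ℕ} (J₁ : Matrix (Fin n) (Fin n) ℂ) (hJ₁ : J₁.IsHermitian)
    (hJ₁sq : J₁ * J₁ = 1)
    (A : ℂ) (B : Matrix (Fin 1) (Fin n) ℂ) (C : Matrix (Fin n) (Fin 1) ℂ)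
    (D : Matrix (Fin n) (Fin n) ℂ)
    (hV : (Matrix.fromBlocks (Matrix.of fun _ _ => A) B C D)ᴴ *
            (Matrix.fromBlocks 1 0 0 J₁) *
            (Matrix.fromBlocks (Matrix.of fun _ _ => A) B C D) = Matrix.fromBlocks 1 0 0 J₁)
    (φ : ℂ → ℂ) (hφ : ∀ l : ℂ, φ l = A + l * (B * (1 - l • D)⁻¹ * C) 0 0)
    (x : ℂ → Matrix (Fin n) (Fin 1) ℂ) (hx : ∀ l : ℂ, x l = (1 - l • D)⁻¹ * C) :
    ∀ l m : ℂ, IsUnit (1 - l • D) → IsUnit (1 - m • D) → l * star m ≠ 1 →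
      ((1 : ℂ) - φ l * star (φ m)) / (1 - l * star m) = ((x m)ᴴ * J₁ * x l) 0 0 :=
  stmt5_general J₁ A B C D hV φ hφ x hx
end

section
/- Let f and g be finite Blaschke products of degrees m and n respectively with no common zeros, and let φ = f/g. For any constant c with |c| < 1, the number of solutions in the open unit disk of φ(z) = c, counted with multiplicity, equals m; for |c| > 1, it equals n. -/
/-!
On the unit circle `|1 - conj(a) z| = |z - a|`, so `levelPoly` cannot vanish there unless
`|c| = 1`. Roots of polynomials depend continuously on the coefficients, hence the number of
zeros in the disk is locally constant in `c` as long as the degree stays `m + n`. The degree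
may drop, but the conjugate reflection `z ↦ z^(m+n) conj(P(1 / conj z))` turns the level
polynomial of `f / g` at `c` into that of `g / f` at `conj c`, up to a unimodular factor. The
two disk counts add up to `m + n`, and at every `c` in the disk one of the two polynomials has
full degree (this is where the zeros of `f` and `g` must be disjoint). So the count is constant
on the disk, and at `c = 0` it is `m`. For `|c| > 1` exchange `f` and `g` and replace `c` by
`c⁻¹`.
-/

open Polynomial

/-- The polynomial whose roots in the disk are the solutions of f/g = c, where
f = cf·∏(z-aₖ)/(1-conj(aₖ)z) and g = cg·∏(z-bₗ)/(1-conj(bₗ)z) are finite Blaschke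
products: clearing denominators, f(z) = c·g(z) iff this polynomial vanishes. -/
noncomputable def levelPoly {m n : ℕ} (cf cg c : ℂ) (a : Fin m → ℂ) (b : Fin n → ℂ) :
    Polynomial ℂ :=
  C cf * ((∏ k, (X - C (a k))) * ∏ l, (1 - C (starRingEnd ℂ (b l)) * X)) -
    C (c * cg) * ((∏ l, (X - C (b l))) * ∏ k, (1 - C (starRingEnd ℂ (a k)) * X))

open Filter Topology ComplexConjugate

theorem Multiset.exists_eq_map_univ {α : Type*} (s : Multiset α) :
    ∃ r : Fin (Multiset.card s) → α, s = Finset.univ.val.map r := by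
  refine ⟨fun i => s.toList.get (i.cast (Multiset.length_toList s).symm), ?_⟩
  rw [Fin.univ_val_map]
  conv_lhs => rw [← Multiset.coe_toList s, ← List.ofFn_get s.toList]
  rw [List.ofFn_congr (Multiset.length_toList s)]

namespace Polynomial

theorem exists_roots_eq_map_univ {K : Type*} [Field K] [IsAlgClosed K] (p : K[X]) :
    ∃ r : Fin p.natDegree → K, p.roots = Finset.univ.val.map r :=
  IsAlgClosed.card_roots_eq_natDegree (p := p) ▸ p.roots.exists_eq_map_univ

theorem eq_C_leadingCoeff_mul_prod_of_roots_eq {K : Type*} [Field K] {p : K[X]} {d : ℕ}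
    (hd : p.natDegree = d) {r : Fin d → K} (hr : p.roots = Finset.univ.val.map r) :
    p = C p.leadingCoeff * ∏ i, (X - C (r i)) := by
  have hcard : Multiset.card p.roots = p.natDegree := by simp [hr, hd]
  conv_lhs => rw [← C_leadingCoeff_mul_prod_multiset_X_sub_C hcard, hr, Multiset.map_map]
  rfl

theorem reflect_prod {R ι : Type*} [CommSemiring R] (s : Finset ι) (f : ι → R[X]) (N : ι → ℕ)
    (h : ∀ i ∈ s, (f i).natDegree ≤ N i) :
    reflect (∑ i ∈ s, N i) (∏ i ∈ s, f i) = ∏ i ∈ s, reflect (N i) (f i) := by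
  induction s using Finset.cons_induction with
  | empty => simp [reflect_one]
  | cons i s hi ih =>
    rw [Finset.forall_mem_cons] at h
    have hs : (∏ j ∈ s, f j).natDegree ≤ ∑ j ∈ s, N j :=
      (natDegree_prod_le _ _).trans (Finset.sum_le_sum h.2)
    rw [Finset.prod_cons, Finset.sum_cons, reflect_mul _ _ h.1 hs, ih h.2, Finset.prod_cons]

theorem one_sub_C_mul_X_ne_zero {R : Type*} [CommRing R] [Nontrivial R] (a : R) :
    (1 - C a * X : R[X]) ≠ 0 := fun h => by simpa using congrArg (eval 0) h

theorem reflect_one_X_sub_C {R : Type*} [CommRing R] (a : R) :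
    reflect 1 (X - C a) = 1 - C a * X := by
  rw [reflect_sub, reflect_one_X, reflect_C, pow_one]

theorem natDegree_prod_X_sub_C_le {R : Type*} [CommRing R] {k : ℕ} (r : Fin k → R) :
    (∏ i, (X - C (r i))).natDegree ≤ k :=
  (natDegree_prod_le _ _).trans
    ((Finset.sum_le_sum fun i _ => natDegree_X_sub_C_le (r i)).trans (by simp))

theorem reflect_prod_X_sub_C {R : Type*} [CommRing R] {k : ℕ} (r : Fin k → R) :
    reflect k (∏ i, (X - C (r i))) = ∏ i, (1 - C (r i) * X) := by
  simpa [reflect_one_X_sub_C] using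
    reflect_prod Finset.univ (fun i => X - C (r i)) (fun _ => 1) fun _ _ => natDegree_X_sub_C_le _

theorem reflect_prod_one_sub_C_mul_X {R : Type*} [CommRing R] {k : ℕ} (r : Fin k → R) :
    reflect k (∏ i, (1 - C (r i) * X)) = ∏ i, (X - C (r i)) := by
  rw [← reflect_prod_X_sub_C, reflect_reflect]

theorem natDegree_prod_one_sub_C_mul_X_le {R : Type*} [CommRing R] {k : ℕ} (r : Fin k → R) :
    (∏ i, (1 - C (r i) * X)).natDegree ≤ k := by
  rw [← reflect_prod_X_sub_C]
  exact natDegree_reflect_le.trans (max_le le_rfl (natDegree_prod_X_sub_C_le r))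

theorem reflect_C_mul_prod_X_sub_C {R : Type*} [CommRing R] {N k : ℕ} (hk : k ≤ N) (u : R)
    (r : Fin k → R) :
    reflect N (C u * ∏ i, (X - C (r i))) = C u * (X ^ (N - k) * ∏ i, (1 - C (r i) * X)) := by
  obtain ⟨t, rfl⟩ := Nat.exists_eq_add_of_le' hk
  rw [Nat.add_sub_cancel, reflect_C_mul, ← one_mul (∏ i, _),
    reflect_mul (F := t) _ _ (by simp) (natDegree_prod_X_sub_C_le r), reflect_one,
    reflect_prod_X_sub_C]

theorem tendsto_eval_of_tendsto_coeff {R ι : Type*} [CommSemiring R] [TopologicalSpace R]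
    [IsTopologicalSemiring R] {l : Filter ι} {P : ι → R[X]} {q : R[X]} {d : ℕ}
    (hP : ∀ t, (P t).natDegree ≤ d) (hq : q.natDegree ≤ d)
    (hco : ∀ k, Tendsto (fun t => (P t).coeff k) l (𝓝 (q.coeff k))) (x : R) :
    Tendsto (fun t => (P t).eval x) l (𝓝 (q.eval x)) := by
  simp only [fun t => eval_eq_sum_range' (Nat.lt_succ_of_le (hP t)) x,
    eval_eq_sum_range' (Nat.lt_succ_of_le hq) x]
  exact tendsto_finsetSum _ fun k _ => (hco k).mul_const _

theorem eq_C_mul_prod_X_sub_C_of_tendsto {K ι : Type*} [NontriviallyNormedField K]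
    {l : Filter ι} [l.NeBot] {P : ι → K[X]} {q : K[X]} {d : ℕ} {r : ι → Fin d → K}
    {z : Fin d → K} (hP : ∀ t, P t = C ((P t).coeff d) * ∏ i, (X - C (r t i)))
    (hPd : ∀ t, (P t).natDegree ≤ d) (hq : q.natDegree ≤ d)
    (hco : ∀ k, Tendsto (fun t => (P t).coeff k) l (𝓝 (q.coeff k))) (hr : Tendsto r l (𝓝 z)) :
    q = C (q.coeff d) * ∏ i, (X - C (z i)) := by
  refine Polynomial.funext fun x =>
    tendsto_nhds_unique (tendsto_eval_of_tendsto_coeff hPd hq hco x) ?_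
  have hprod : Tendsto (fun t => (P t).coeff d * ∏ i, (x - r t i)) l
      (𝓝 (q.coeff d * ∏ i, (x - z i))) :=
    (hco d).mul <| tendsto_finsetProd _ fun i _ =>
      tendsto_const_nhds.sub (tendsto_pi_nhds.1 hr i)
  convert hprod using 2 with t
  · conv_lhs => rw [hP t]
    simp [eval_prod]
  · simp [eval_prod]

theorem tendsto_cauchyBound {K ι : Type*} [NormedDivisionRing K] {l : Filter ι}
    {P : ι → K[X]} {q : K[X]} {d : ℕ} (hP : ∀ t, (P t).natDegree = d) (hq : q.natDegree = d)
    (hq0 : q ≠ 0) (hco : ∀ k, Tendsto (fun t => (P t).coeff k) l (𝓝 (q.coeff k))) :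
    Tendsto (fun t => (P t).cauchyBound) l (𝓝 q.cauchyBound) := by
  simp only [cauchyBound, leadingCoeff, hP, hq]
  refine Tendsto.add_const _ (Tendsto.div ?_ (hco d).nnnorm ?_)
  · exact Tendsto.finset_sup_nhds_apply fun i _ => (hco i).nnnorm
  · simpa [← hq] using hq0

end Polynomial

theorem Filter.Tendsto.eventually_norm_lt_one_iff {E ι : Type*} [SeminormedAddGroup E]
    {l : Filter ι} {u : ι → E} {w : E} (hu : Tendsto u l (𝓝 w)) (hw : ‖w‖ ≠ 1) :
    ∀ᶠ t in l, (‖u t‖ < 1 ↔ ‖w‖ < 1) := by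
  rcases hw.lt_or_gt with hw | hw
  · filter_upwards [hu.norm.eventually (eventually_lt_nhds hw)] with t ht
    simp [ht, hw]
  · filter_upwards [hu.norm.eventually (eventually_gt_nhds hw)] with t ht
    simp [ht.le.not_gt, hw.le.not_gt]

noncomputable def diskRootCount (p : ℂ[X]) : ℕ :=
  Multiset.card (p.roots.filter fun z => ‖z‖ < 1)

theorem diskRootCount_mul {p q : ℂ[X]} (h : p * q ≠ 0) :
    diskRootCount (p * q) = diskRootCount p + diskRootCount q := by
  rw [diskRootCount, roots_mul h, Multiset.filter_add, Multiset.card_add]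
  rfl

theorem diskRootCount_C_mul {u : ℂ} (hu : u ≠ 0) (p : ℂ[X]) :
    diskRootCount (C u * p) = diskRootCount p := by
  rw [diskRootCount, roots_C_mul _ hu]
  rfl

theorem diskRootCount_prod {ι : Type*} (s : Finset ι) (f : ι → ℂ[X])
    (h : ∀ i ∈ s, f i ≠ 0) :
    diskRootCount (∏ i ∈ s, f i) = ∑ i ∈ s, diskRootCount (f i) := by
  induction s using Finset.cons_induction with
  | empty => simp [diskRootCount]
  | cons i s hi ih =>
    rw [Finset.forall_mem_cons] at h
    rw [Finset.prod_cons, Finset.sum_cons, diskRootCount_mul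
      (mul_ne_zero h.1 (Finset.prod_ne_zero_iff.2 h.2)), ih h.2]

theorem diskRootCount_X_sub_C (w : ℂ) :
    diskRootCount (X - C w) = if ‖w‖ < 1 then 1 else 0 := by
  rw [diskRootCount, roots_X_sub_C, Multiset.filter_singleton]
  split_ifs <;> rfl

theorem diskRootCount_one_sub_C_mul_X (w : ℂ) :
    diskRootCount (1 - C w * X) = if 1 < ‖w‖ then 1 else 0 := by
  rcases eq_or_ne w 0 with rfl | hw
  · simp [diskRootCount]
  have h : (1 - C w * X : ℂ[X]) = C (-w) * (X - C w⁻¹) := by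
    rw [mul_sub, ← C_mul, neg_mul, mul_inv_cancel₀ hw, C_neg, C_neg, C_1]
    ring
  rw [h, diskRootCount_C_mul (neg_ne_zero.2 hw), diskRootCount_X_sub_C, norm_inv]
  simp only [inv_lt_one₀ (norm_pos_iff.2 hw)]

theorem diskRootCount_X_pow (k : ℕ) : diskRootCount (X ^ k) = k := by
  rw [diskRootCount, roots_X_pow, Multiset.filter_eq_self.2 (by simp), Multiset.card_nsmul,
    Multiset.card_singleton, mul_one]

theorem diskRootCount_map_conj (p : ℂ[X]) :
    diskRootCount (p.map (starRingEnd ℂ)) = diskRootCount p := by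
  rw [diskRootCount, ← roots_map_of_injective_of_card_eq_natDegree (starRingEnd ℂ).injective
    IsAlgClosed.card_roots_eq_natDegree, Multiset.filter_map, Multiset.card_map]
  simp [diskRootCount]

theorem diskRootCount_eq_card_filter {p : ℂ[X]} {d : ℕ} {r : Fin d → ℂ}
    (hr : p.roots = Finset.univ.val.map r) :
    diskRootCount p = (Finset.univ.filter fun i => ‖r i‖ < 1).card := by
  rw [diskRootCount, hr, Multiset.filter_map, Multiset.card_map]
  rfl

theorem diskRootCount_add_diskRootCount_reflect {p : ℂ[X]} {N : ℕ} (hp : p ≠ 0)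
    (hN : p.natDegree ≤ N) (hcirc : ∀ z, ‖z‖ = 1 → p.eval z ≠ 0) :
    diskRootCount p + diskRootCount (reflect N p) = N := by
  obtain ⟨r, hr⟩ := p.exists_roots_eq_map_univ
  have hr1 : ∀ i, ‖r i‖ ≠ 1 := fun i h => hcirc _ h (mem_roots'.1 (by simp [hr])).2
  have hlead : p.leadingCoeff ≠ 0 := leadingCoeff_ne_zero.2 hp
  have hdual : (∏ i, (1 - C (r i) * X)) ≠ 0 :=
    Finset.prod_ne_zero_iff.2 fun i _ => one_sub_C_mul_X_ne_zero _
  rw [eq_C_leadingCoeff_mul_prod_of_roots_eq rfl hr, reflect_C_mul_prod_X_sub_C hN,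
    diskRootCount_C_mul hlead, diskRootCount_C_mul hlead,
    diskRootCount_mul (mul_ne_zero (pow_ne_zero _ X_ne_zero) hdual), diskRootCount_X_pow,
    diskRootCount_prod _ _ fun i _ => X_sub_C_ne_zero _,
    diskRootCount_prod _ _ fun i _ => one_sub_C_mul_X_ne_zero _]
  simp only [diskRootCount_X_sub_C, diskRootCount_one_sub_C_mul_X]
  have hsplit : ∀ i, (if ‖r i‖ < 1 then 1 else 0) + (if 1 < ‖r i‖ then 1 else 0) = 1 :=
    fun i => by rcases (hr1 i).lt_or_gt with h | h <;> simp [h, h.not_gt]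
  rw [add_left_comm, ← Finset.sum_add_distrib, Finset.sum_congr rfl fun i _ => hsplit i]
  simp only [Finset.sum_const, Finset.card_univ, Fintype.card_fin, smul_eq_mul, mul_one]
  omega

theorem frequently_diskRootCount_eq {P : ℕ → ℂ[X]} {q : ℂ[X]} {d : ℕ}
    (hP : ∀ j, (P j).natDegree = d) (hq : q.natDegree = d) (hq0 : q ≠ 0)
    (hco : ∀ k, Tendsto (fun j => (P j).coeff k) atTop (𝓝 (q.coeff k)))
    (hcirc : ∀ z, ‖z‖ = 1 → q.eval z ≠ 0) :
    ∃ᶠ j in atTop, diskRootCount (P j) = diskRootCount q := by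
  -- Along a subsequence the roots of `P j` converge to those of `q`; as none of the latter lies
  -- on the circle, eventually each root of `P j` is on the same side of it as its limit.
  choose r hr using fun j => hP j ▸ (P j).exists_roots_eq_map_univ
  have hroot : ∀ j i, r j i ∈ (P j).roots := fun j i => by simp [hr j]
  obtain ⟨B, hB⟩ := (tendsto_cauchyBound hP hq hq0 hco).bddAbove_range
  have hbdd : ∀ j, r j ∈ Metric.closedBall (0 : Fin d → ℂ) B := fun j => by
    refine mem_closedBall_zero_iff.2 ((pi_norm_le_iff_of_nonneg B.2).2 fun i => ?_)
    obtain ⟨hP0, hPr⟩ := mem_roots'.1 (hroot j i)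
    exact (hPr.norm_lt_cauchyBound hP0).le.trans (hB ⟨j, rfl⟩)
  obtain ⟨z, -, φ, hφ, hrz⟩ := tendsto_subseq_of_bounded Metric.isBounded_closedBall hbdd
  have hq_eq : q = C (q.coeff d) * ∏ i, (X - C (z i)) :=
    eq_C_mul_prod_X_sub_C_of_tendsto (P := P ∘ φ)
      (fun j => by
        simpa [leadingCoeff, hP] using eq_C_leadingCoeff_mul_prod_of_roots_eq (hP _) (hr (φ j)))
      (fun j => (hP _).le) hq.le (fun k => (hco k).comp hφ.tendsto_atTop) hrz
  have hqz : q.roots = Finset.univ.val.map z := by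
    rw [hq_eq, roots_C_mul _ (by simpa [← hq] using hq0),
      roots_prod _ _ (Finset.prod_ne_zero_iff.2 fun i _ => X_sub_C_ne_zero _)]
    simp
  have hz : ∀ i, ‖z i‖ ≠ 1 := fun i h => hcirc _ h (mem_roots'.1 (by simp [hqz])).2
  refine hφ.tendsto_atTop.frequently (Eventually.frequently ?_)
  filter_upwards [eventually_all.2 fun i =>
    (tendsto_pi_nhds.1 hrz i).eventually_norm_lt_one_iff (hz i)] with j hj
  rw [diskRootCount_eq_card_filter (hr _), diskRootCount_eq_card_filter hqz]
  simp only [Function.comp_apply] at hj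
  simp only [hj]

theorem Filter.Tendsto.eventually_diskRootCount_eq {ι : Type*} {l : Filter ι}
    [l.IsCountablyGenerated] {P : ι → ℂ[X]} {q : ℂ[X]} {d : ℕ}
    (hP : ∀ t, (P t).natDegree ≤ d) (hq : q.natDegree = d) (hq0 : q ≠ 0)
    (hco : ∀ k, Tendsto (fun t => (P t).coeff k) l (𝓝 (q.coeff k)))
    (hcirc : ∀ z, ‖z‖ = 1 → q.eval z ≠ 0) :
    ∀ᶠ t in l, diskRootCount (P t) = diskRootCount q := by
  by_contra h
  have hdeg : ∀ᶠ t in l, (P t).natDegree = d :=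
    ((hco d).eventually_ne (by simpa [← hq] using hq0)).mono fun t ht =>
      (hP t).antisymm (le_natDegree_of_ne_zero ht)
  obtain ⟨u, hu, hbad⟩ :=
    exists_seq_forall_of_frequently ((not_eventually.1 h).and_eventually hdeg)
  obtain ⟨j, hj⟩ := (frequently_diskRootCount_eq (fun j => (hbad j).2) hq hq0
    (fun k => (hco k).comp hu) hcirc).exists
  exact (hbad j).1 hj

theorem norm_one_sub_conj_mul_of_norm_eq_one {z : ℂ} (hz : ‖z‖ = 1) (w : ℂ) :
    ‖1 - conj w * z‖ = ‖z - w‖ := by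
  have hzz : z * conj z = 1 := by rw [Complex.mul_conj, Complex.normSq_eq_norm_sq, hz]; norm_num
  rw [show 1 - conj w * z = z * conj (z - w) by rw [map_sub, mul_sub, hzz]; ring,
    norm_mul, hz, Complex.norm_conj, one_mul]

section LevelPoly

variable {m n : ℕ} {cf cg c : ℂ} {a : Fin m → ℂ} {b : Fin n → ℂ}

theorem natDegree_levelPoly_le (cf cg c : ℂ) (a : Fin m → ℂ) (b : Fin n → ℂ) :
    (levelPoly cf cg c a b).natDegree ≤ m + n := by
  refine (natDegree_sub_le _ _).trans (max_le ?_ ?_) <;>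
    refine (natDegree_C_mul_le _ _).trans (natDegree_mul_le.trans ?_)
  · exact add_le_add (natDegree_prod_X_sub_C_le a) (natDegree_prod_one_sub_C_mul_X_le _)
  · rw [add_comm m]
    exact add_le_add (natDegree_prod_X_sub_C_le b) (natDegree_prod_one_sub_C_mul_X_le _)

theorem levelPoly_eval_ne_zero (hcf : ‖cf‖ = 1) (hcg : ‖cg‖ = 1) (ha : ∀ k, ‖a k‖ < 1)
    (hb : ∀ l, ‖b l‖ < 1) (hc : ‖c‖ ≠ 1) {z : ℂ} (hz : ‖z‖ = 1) :
    (levelPoly cf cg c a b).eval z ≠ 0 := by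
  intro h
  simp only [levelPoly, eval_sub, eval_mul, eval_C, eval_prod, eval_one, eval_X, sub_eq_zero]
    at h
  have hnorm := congrArg norm h
  simp only [norm_mul, norm_prod, norm_one_sub_conj_mul_of_norm_eq_one hz, hcf, hcg, one_mul,
    mul_one] at hnorm
  have hA : ∏ k, ‖z - a k‖ ≠ 0 := Finset.prod_ne_zero_iff.2 fun k _ => by
    simpa [sub_eq_zero] using fun h : z = a k => (ha k).ne (h ▸ hz)
  have hB : ∏ l, ‖z - b l‖ ≠ 0 := Finset.prod_ne_zero_iff.2 fun l _ => by
    simpa [sub_eq_zero] using fun h : z = b l => (hb l).ne (h ▸ hz)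
  refine hc (mul_right_cancel₀ (mul_ne_zero hA hB) ?_).symm
  linear_combination hnorm

theorem levelPoly_ne_zero (hcf : ‖cf‖ = 1) (hcg : ‖cg‖ = 1) (ha : ∀ k, ‖a k‖ < 1)
    (hb : ∀ l, ‖b l‖ < 1) (hc : ‖c‖ ≠ 1) : levelPoly cf cg c a b ≠ 0 := fun h =>
  levelPoly_eval_ne_zero hcf hcg ha hb hc norm_one (by rw [h, eval_zero])

theorem reflect_levelPoly (cf cg c : ℂ) (a : Fin m → ℂ) (b : Fin n → ℂ) :
    reflect (m + n) (levelPoly cf cg c a b) =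
      C cf * ((∏ k, (1 - C (a k) * X)) * ∏ l, (X - C (conj (b l)))) -
        C (c * cg) * ((∏ l, (1 - C (b l) * X)) * ∏ k, (X - C (conj (a k)))) := by
  rw [levelPoly, reflect_sub, reflect_C_mul, reflect_C_mul,
    reflect_mul _ _ (natDegree_prod_X_sub_C_le a) (natDegree_prod_one_sub_C_mul_X_le _),
    add_comm m n,
    reflect_mul _ _ (natDegree_prod_X_sub_C_le b) (natDegree_prod_one_sub_C_mul_X_le _)]
  simp only [reflect_prod_X_sub_C, reflect_prod_one_sub_C_mul_X]

theorem map_conj_reflect_levelPoly (hcf : ‖cf‖ = 1) (hcg : ‖cg‖ = 1) (c : ℂ) (a : Fin m → ℂ)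
    (b : Fin n → ℂ) :
    (reflect (m + n) (levelPoly cf cg c a b)).map (starRingEnd ℂ) =
      C (conj (cf * cg)) * levelPoly cg cf (conj c) b a := by
  have hunit : ∀ u : ℂ, ‖u‖ = 1 → C u * C (conj u) = 1 := fun u hu => by
    rw [← C_mul, Complex.mul_conj, Complex.normSq_eq_norm_sq, hu]; simp
  rw [reflect_levelPoly, levelPoly]
  simp only [Polynomial.map_sub, Polynomial.map_mul, Polynomial.map_prod, Polynomial.map_one,
    map_C, map_X, Complex.conj_conj, map_mul]
  linear_combination (-(C (conj cf) *
      ((∏ k, (1 - C (conj (a k)) * X)) * ∏ l, (X - C (b l))))) * hunit cg hcg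
    + (C (conj c) * C (conj cg) *
      ((∏ l, (1 - C (conj (b l)) * X)) * ∏ k, (X - C (a k)))) * hunit cf hcf

theorem coeff_levelPoly_top (cf cg c : ℂ) (a : Fin m → ℂ) (b : Fin n → ℂ) :
    (levelPoly cf cg c a b).coeff (m + n) =
      cf * ∏ l, -conj (b l) - c * cg * ∏ k, -conj (a k) := by
  rw [← revAt_zero (m + n), ← coeff_reflect, reflect_levelPoly, coeff_zero_eq_eval_zero]
  simp [eval_prod]

theorem coeff_levelPoly_top_ne_zero_or (hcf : ‖cf‖ = 1) (hcg : ‖cg‖ = 1)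
    (hdisj : ∀ k l, a k ≠ b l) (hc : ‖c‖ < 1) :
    (levelPoly cf cg c a b).coeff (m + n) ≠ 0 ∨
      (levelPoly cg cf (conj c) b a).coeff (n + m) ≠ 0 := by
  rw [coeff_levelPoly_top, coeff_levelPoly_top]
  by_contra! h
  obtain ⟨h₁, h₂⟩ := h
  have hc' : 1 - conj c * c ≠ 0 := by
    rw [mul_comm, Complex.mul_conj, Complex.normSq_eq_norm_sq, sub_ne_zero]
    exact_mod_cast (pow_lt_one₀ (norm_nonneg c) hc two_ne_zero).ne'
  have hcg0 : cg ≠ 0 := norm_ne_zero_iff.1 (hcg ▸ one_ne_zero)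
  have hcf0 : cf ≠ 0 := norm_ne_zero_iff.1 (hcf ▸ one_ne_zero)
  have hα : ∏ k, -conj (a k) = 0 := by
    have : cg * (∏ k, -conj (a k)) * (1 - conj c * c) = 0 := by
      linear_combination h₂ + conj c * h₁
    simpa [hcg0, hc'] using this
  have hβ : ∏ l, -conj (b l) = 0 := by
    rw [hα, mul_zero, sub_zero] at h₁
    simpa [hcf0] using h₁
  obtain ⟨k, -, hk⟩ := Finset.prod_eq_zero_iff.1 hα
  obtain ⟨l, -, hl⟩ := Finset.prod_eq_zero_iff.1 hβ
  exact hdisj k l (by simp_all)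

theorem diskRootCount_levelPoly_zero (hcf : ‖cf‖ = 1) (ha : ∀ k, ‖a k‖ < 1)
    (hb : ∀ l, ‖b l‖ < 1) : diskRootCount (levelPoly cf cg 0 a b) = m := by
  have hcf0 : cf ≠ 0 := norm_ne_zero_iff.1 (hcf ▸ one_ne_zero)
  rw [levelPoly, zero_mul, C_0, zero_mul, sub_zero, diskRootCount_C_mul hcf0,
    diskRootCount_mul (mul_ne_zero (Finset.prod_ne_zero_iff.2 fun k _ => X_sub_C_ne_zero _)
      (Finset.prod_ne_zero_iff.2 fun l _ => one_sub_C_mul_X_ne_zero _)),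
    diskRootCount_prod _ _ fun k _ => X_sub_C_ne_zero _,
    diskRootCount_prod _ _ fun l _ => one_sub_C_mul_X_ne_zero _]
  simp [diskRootCount_X_sub_C, diskRootCount_one_sub_C_mul_X, ha, (hb _).not_gt]

theorem continuous_coeff_levelPoly (cf cg : ℂ) (a : Fin m → ℂ) (b : Fin n → ℂ) (k : ℕ) :
    Continuous fun c => (levelPoly cf cg c a b).coeff k := by
  simp only [levelPoly, coeff_sub, coeff_C_mul]
  fun_prop

theorem levelPoly_eq_C_mul_levelPoly_inv (hc : c ≠ 0) :
    levelPoly cf cg c a b = C (-c) * levelPoly cg cf c⁻¹ b a := by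
  have hinv : C c * C c⁻¹ = 1 := by rw [← C_mul, mul_inv_cancel₀ hc, C_1]
  simp only [levelPoly, C_mul, C_neg]
  linear_combination
    (-(C cf * ((∏ k, (X - C (a k))) * ∏ l, (1 - C (conj (b l)) * X)))) * hinv

theorem diskRootCount_levelPoly_add_swap (hcf : ‖cf‖ = 1) (hcg : ‖cg‖ = 1) (ha : ∀ k, ‖a k‖ < 1)
    (hb : ∀ l, ‖b l‖ < 1) (hc : ‖c‖ ≠ 1) :
    diskRootCount (levelPoly cf cg c a b) + diskRootCount (levelPoly cg cf (conj c) b a) =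
      m + n := by
  have hcfg : conj (cf * cg) ≠ 0 := by simp [← norm_ne_zero_iff, hcf, hcg]
  have h := diskRootCount_add_diskRootCount_reflect (levelPoly_ne_zero hcf hcg ha hb hc)
    (natDegree_levelPoly_le cf cg c a b) fun z => levelPoly_eval_ne_zero hcf hcg ha hb hc
  rwa [← diskRootCount_map_conj (reflect _ _), map_conj_reflect_levelPoly hcf hcg,
    diskRootCount_C_mul hcfg] at h

theorem eventually_diskRootCount_levelPoly_eq_of_coeff_ne_zero (hcf : ‖cf‖ = 1)
    (hcg : ‖cg‖ = 1) (ha : ∀ k, ‖a k‖ < 1) (hb : ∀ l, ‖b l‖ < 1) (hc : ‖c‖ ≠ 1)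
    (htop : (levelPoly cf cg c a b).coeff (m + n) ≠ 0) :
    ∀ᶠ c' in 𝓝 c, diskRootCount (levelPoly cf cg c' a b) =
      diskRootCount (levelPoly cf cg c a b) :=
  Tendsto.eventually_diskRootCount_eq (l := 𝓝 c)
    (fun c' => natDegree_levelPoly_le cf cg c' a b)
    ((natDegree_levelPoly_le cf cg c a b).antisymm (le_natDegree_of_ne_zero htop))
    (levelPoly_ne_zero hcf hcg ha hb hc)
    (fun k => (continuous_coeff_levelPoly cf cg a b k).tendsto c)
    fun _ => levelPoly_eval_ne_zero hcf hcg ha hb hc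

theorem eventually_diskRootCount_levelPoly_eq (hcf : ‖cf‖ = 1) (hcg : ‖cg‖ = 1)
    (ha : ∀ k, ‖a k‖ < 1) (hb : ∀ l, ‖b l‖ < 1) (hdisj : ∀ k l, a k ≠ b l) (hc : ‖c‖ < 1) :
    ∀ᶠ c' in 𝓝 c, diskRootCount (levelPoly cf cg c' a b) =
      diskRootCount (levelPoly cf cg c a b) := by
  rcases coeff_levelPoly_top_ne_zero_or hcf hcg hdisj hc with htop | htop
  · exact eventually_diskRootCount_levelPoly_eq_of_coeff_ne_zero hcf hcg ha hb hc.ne htop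
  -- The degree drops at `c`, but not that of the swapped problem at `conj c`.
  have hc' : ‖conj c‖ ≠ 1 := by rw [Complex.norm_conj]; exact hc.ne
  have hdual := (Complex.continuous_conj.tendsto c).eventually
    (eventually_diskRootCount_levelPoly_eq_of_coeff_ne_zero hcg hcf hb ha hc' htop)
  filter_upwards [hdual, (Metric.isOpen_ball.mem_nhds (mem_ball_zero_iff.2 hc))] with c' h h'
  have := diskRootCount_levelPoly_add_swap hcf hcg ha hb (mem_ball_zero_iff.1 h').ne
  have := diskRootCount_levelPoly_add_swap hcf hcg ha hb hc.ne
  omega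

theorem diskRootCount_levelPoly_of_norm_lt_one (hcf : ‖cf‖ = 1) (hcg : ‖cg‖ = 1)
    (ha : ∀ k, ‖a k‖ < 1) (hb : ∀ l, ‖b l‖ < 1) (hdisj : ∀ k l, a k ≠ b l) (hc : ‖c‖ < 1) :
    diskRootCount (levelPoly cf cg c a b) = m := by
  refine ((convex_ball (0 : ℂ) 1).isPreconnected.constant
    (f := fun c => diskRootCount (levelPoly cf cg c a b)) (fun c' hc' => ?_)
    (mem_ball_zero_iff.2 hc) (Metric.mem_ball_self one_pos)).trans
    (diskRootCount_levelPoly_zero hcf ha hb)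
  exact ContinuousAt.continuousWithinAt <| tendsto_nhds_of_eventually_eq <|
    eventually_diskRootCount_levelPoly_eq hcf hcg ha hb hdisj (mem_ball_zero_iff.1 hc')

end LevelPoly

/-- for Blaschke products f, g of degrees m, n with disjoint zero sets,
and φ = f/g, the equation φ(z) = c has exactly m solutions in 𝔻 (with multiplicity)
when |c| < 1, and exactly n solutions when |c| > 1. -/
theorem stmt8 {m n : ℕ} (cf cg : ℂ) (hcf : ‖cf‖ = 1) (hcg : ‖cg‖ = 1)
    (a : Fin m → ℂ) (b : Fin n → ℂ)
    (ha : ∀ k, ‖a k‖ < 1) (hb : ∀ l, ‖b l‖ < 1)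
    (hdisj : ∀ k l, a k ≠ b l) (c : ℂ) :
    (‖c‖ < 1 →
      Multiset.card ((levelPoly cf cg c a b).roots.filter fun z => ‖z‖ < 1) = m) ∧
    (1 < ‖c‖ →
      Multiset.card ((levelPoly cf cg c a b).roots.filter fun z => ‖z‖ < 1) = n) := by
  refine ⟨diskRootCount_levelPoly_of_norm_lt_one hcf hcg ha hb hdisj, fun hc => ?_⟩
  have hc0 : c ≠ 0 := norm_pos_iff.1 (one_pos.trans hc)
  change diskRootCount _ = n
  rw [levelPoly_eq_C_mul_levelPoly_inv hc0, diskRootCount_C_mul (neg_ne_zero.2 hc0)]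
  exact diskRootCount_levelPoly_of_norm_lt_one hcg hcf hb ha (fun l k h => hdisj k l h.symm)
    (by rw [norm_inv]; exact inv_lt_one_of_one_lt₀ hc)
end

section
/- If f is a finite Blaschke product of degree m and λ_1,...,λ_N are points of the unit disk, then the matrix with entries (1 - f(λ_i) conj(f(λ_j)))/(1 - λ_i conj(λ_j)) is positive semi-definite of rank at most m. -/
/-!
The de Branges–Rovnyak kernel `(1 - f z * conj (f w)) / (1 - z * conj w)` of a Blaschke product
of degree `m` is a sum of `m` products `g k z * conj (g k w)`. For a unimodular constant the
kernel vanishes, for a single factor `(z - a) / (1 - conj a * z)` it is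
`(1 - |a|²) / ((1 - conj a * z) * (1 - a * conj w))`, and for a product `φ ψ` it is
`K_φ + φ z * conj (φ w) * K_ψ`, so the numbers of terms add up. Evaluated at the nodes this writes
the Pick matrix as `A * Aᴴ` with `A` of size `N × m`.
-/

open scoped ComplexOrder

/-- A finite Blaschke product with unimodular constant `c` and zeros `a k`. -/
noncomputable def blaschke {m : ℕ} (c : ℂ) (a : Fin m → ℂ) : ℂ → ℂ :=
  fun z => c * ∏ k, (z - a k) / (1 - (starRingEnd ℂ) (a k) * z)

/-- The Pick matrix of f at the nodes l i. -/
noncomputable def pickMatrix {N : ℕ} (φ : ℂ → ℂ) (l : Fin N → ℂ) :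
    Matrix (Fin N) (Fin N) ℂ :=
  Matrix.of fun i j => (1 - φ (l i) * star (φ (l j))) / (1 - l i * star (l j))

open ComplexConjugate Matrix

noncomputable def blaschkeFactor (a z : ℂ) : ℂ := (z - a) / (1 - conj a * z)

def HasPickFactorization (φ : ℂ → ℂ) (n : ℕ) : Prop :=
  ∃ g : Fin n → ℂ → ℂ, ∀ z w : ℂ, ‖z‖ < 1 → ‖w‖ < 1 →
    1 - φ z * conj (φ w) = (1 - z * conj w) * ∑ k, g k z * conj (g k w)

lemma one_sub_mul_ne_zero_of_norm_lt_one {u v : ℂ} (hu : ‖u‖ < 1) (hv : ‖v‖ < 1) :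
    1 - u * v ≠ 0 := by
  refine sub_ne_zero.2 fun h => ?_
  have : ‖u * v‖ < 1 := by
    rw [norm_mul]
    nlinarith [norm_nonneg u, norm_nonneg v]
  rw [← h, norm_one] at this
  exact this.false

lemma hasPickFactorization_const {c : ℂ} (hc : ‖c‖ = 1) :
    HasPickFactorization (fun _ => c) 0 :=
  ⟨Fin.elim0, fun _ _ _ _ => by
    simp [Complex.mul_conj, Complex.normSq_eq_norm_sq, hc]⟩

lemma HasPickFactorization.mul {φ ψ : ℂ → ℂ} {m n : ℕ} (hφ : HasPickFactorization φ m)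
    (hψ : HasPickFactorization ψ n) : HasPickFactorization (fun z => φ z * ψ z) (m + n) := by
  obtain ⟨g, hg⟩ := hφ
  obtain ⟨h, hh⟩ := hψ
  refine ⟨fun k z => Fin.append (fun i => g i z) (fun j => φ z * h j z) k,
    fun z w hz hw => ?_⟩
  have split : 1 - φ z * ψ z * conj (φ w * ψ w) =
      (1 - φ z * conj (φ w)) + φ z * conj (φ w) * (1 - ψ z * conj (ψ w)) := by
    simp only [map_mul]; ring
  have pull : ∑ j, φ z * h j z * (conj (φ w) * conj (h j w)) =
      φ z * conj (φ w) * ∑ j, h j z * conj (h j w) := by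
    rw [Finset.mul_sum]
    exact Finset.sum_congr rfl fun j _ => by ring
  rw [split, hg z w hz hw, hh z w hz hw, Fin.sum_univ_add]
  simp only [Fin.append_left, Fin.append_right, map_mul]
  rw [pull]
  ring

lemma hasPickFactorization_prod {ι : Type*} (s : Finset ι) {f : ι → ℂ → ℂ} {n : ι → ℕ}
    (hf : ∀ i ∈ s, HasPickFactorization (f i) (n i)) :
    HasPickFactorization (fun z => ∏ i ∈ s, f i z) (∑ i ∈ s, n i) := by
  classical
  induction s using Finset.induction_on with
  | empty => simpa using hasPickFactorization_const (c := 1) norm_one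
  | insert i s hi ih =>
    simp only [Finset.prod_insert hi, Finset.sum_insert hi]
    exact (hf i (Finset.mem_insert_self i s)).mul
      (ih fun j hj => hf j (Finset.mem_insert_of_mem hj))

lemma hasPickFactorization_blaschkeFactor {a : ℂ} (ha : ‖a‖ < 1) :
    HasPickFactorization (blaschkeFactor a) 1 := by
  refine ⟨fun _ z => (Real.sqrt (1 - ‖a‖ ^ 2) : ℂ) / (1 - conj a * z),
    fun z w hz hw => ?_⟩
  have hz_den : 1 - z * conj a ≠ 0 :=
    one_sub_mul_ne_zero_of_norm_lt_one hz (by rwa [Complex.norm_conj])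
  have hw_den : 1 - a * conj w ≠ 0 :=
    one_sub_mul_ne_zero_of_norm_lt_one ha (by rwa [Complex.norm_conj])
  have hsq : (Real.sqrt (1 - ‖a‖ ^ 2) : ℂ) * (Real.sqrt (1 - ‖a‖ ^ 2) : ℂ) = 1 - a * conj a := by
    rw [← Complex.ofReal_mul, Real.mul_self_sqrt (by nlinarith [norm_nonneg a]),
      Complex.mul_conj, Complex.normSq_eq_norm_sq]
    push_cast; ring
  have hterm : (Real.sqrt (1 - ‖a‖ ^ 2) : ℂ) / (1 - conj a * z) *
      ((Real.sqrt (1 - ‖a‖ ^ 2) : ℂ) / (1 - a * conj w)) =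
      (1 - a * conj a) / ((1 - conj a * z) * (1 - a * conj w)) := by
    rw [div_mul_div_comm, hsq]
  simp only [blaschkeFactor, Finset.univ_unique, Finset.sum_singleton, map_div₀, map_sub,
    map_mul, map_one, Complex.conj_conj, Complex.conj_ofReal]
  rw [hterm]
  field_simp
  ring

lemma hasPickFactorization_blaschke {m : ℕ} {c : ℂ} (hc : ‖c‖ = 1) {a : Fin m → ℂ}
    (ha : ∀ k, ‖a k‖ < 1) : HasPickFactorization (blaschke c a) m := by
  have hprod := hasPickFactorization_prod Finset.univ
    fun k _ => hasPickFactorization_blaschkeFactor (ha k)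
  simp only [Finset.sum_const, Finset.card_univ, Fintype.card_fin, smul_eq_mul, mul_one] at hprod
  have h := (hasPickFactorization_const hc).mul hprod
  rw [zero_add] at h
  exact h

lemma HasPickFactorization.pickMatrix_eq_mul_conjTranspose {φ : ℂ → ℂ} {n N : ℕ}
    (hφ : HasPickFactorization φ n) {l : Fin N → ℂ} (hl : ∀ i, ‖l i‖ < 1) :
    ∃ A : Matrix (Fin N) (Fin n) ℂ, pickMatrix φ l = A * Aᴴ := by
  obtain ⟨g, hg⟩ := hφ
  refine ⟨Matrix.of fun i k => g k (l i), Matrix.ext fun i j => ?_⟩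
  have hne : 1 - l i * conj (l j) ≠ 0 :=
    one_sub_mul_ne_zero_of_norm_lt_one (hl i) (by rw [Complex.norm_conj]; exact hl j)
  simp only [pickMatrix, Matrix.of_apply, Complex.star_def, hg _ _ (hl i) (hl j),
    mul_div_cancel_left₀ _ hne, Matrix.mul_apply, Matrix.conjTranspose_apply]

theorem stmt10_general {m N : ℕ} (c : ℂ) (hc : ‖c‖ = 1)
    (a : Fin m → ℂ) (ha : ∀ k, ‖a k‖ < 1)
    (l : Fin N → ℂ) (hl : ∀ i, ‖l i‖ < 1) :
    (pickMatrix (blaschke c a) l).PosSemidef ∧ (pickMatrix (blaschke c a) l).rank ≤ m := by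
  obtain ⟨A, hA⟩ :=
    (hasPickFactorization_blaschke hc ha).pickMatrix_eq_mul_conjTranspose hl
  rw [hA]
  exact ⟨Matrix.posSemidef_self_mul_conjTranspose A,
    (Matrix.rank_mul_le_left A Aᴴ).trans (by simpa using A.rank_le_card_width)⟩

/-- for a finite Blaschke product f of degree m and distinct points
λ_1,…,λ_N ∈ 𝔻, the Pick matrix of f is positive semi-definite of rank at most m. -/
theorem stmt10 {m N : ℕ} (c : ℂ) (hc : ‖c‖ = 1)
    (a : Fin m → ℂ) (ha : ∀ k, ‖a k‖ < 1)
    (l : Fin N → ℂ) (hl : ∀ i, ‖l i‖ < 1)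
    (hinj : Function.Injective l) :
    (pickMatrix (blaschke c a) l).PosSemidef ∧ (pickMatrix (blaschke c a) l).rank ≤ m :=
  stmt10_general c hc a ha l hl
end

section
/- Let Γ be an N×N Hermitian matrix with ζ-dimensional kernel, B an N×η matrix, and C an invertible η×η Hermitian matrix with η ≤ ζ. If Γ - B C^{-1} B* is invertible, then η = ζ and rank(B C^{-1} B*) = ζ. -/
open scoped Matrix

open Module in
/-- A vector killed by both `A` and `X` is killed by the invertible `A - X`, so the kernels of
`A` and `X` are independent and `dim ker A ≤ n - dim ker X = rank X`. -/
theorem Matrix.finrank_ker_le_rank_of_isUnit_sub {K n : Type*} [Field K] [Fintype n]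
    [DecidableEq n] {A X : Matrix n n K} (h : IsUnit (A - X)) :
    finrank K (LinearMap.ker A.mulVecLin) ≤ X.rank := by
  have hdisj : LinearMap.ker A.mulVecLin ⊓ LinearMap.ker X.mulVecLin = ⊥ := by
    refine eq_bot_iff.2 fun v ⟨hA, hX⟩ => ?_
    have hAX : (A - X) *ᵥ v = 0 := by
      rw [Matrix.sub_mulVec, ← Matrix.mulVecLin_apply, ← Matrix.mulVecLin_apply, hA, hX, sub_zero]
    exact (Submodule.mem_bot K).2 <|
      (Matrix.mulVec_injective_iff_isUnit.2 h) (hAX.trans (Matrix.mulVec_zero _).symm)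
  have hsum := Submodule.finrank_sup_add_finrank_inf_eq
    (LinearMap.ker A.mulVecLin) (LinearMap.ker X.mulVecLin)
  rw [hdisj, finrank_bot, add_zero] at hsum
  have hX := LinearMap.finrank_range_add_finrank_ker X.mulVecLin
  have hle := Submodule.finrank_le (LinearMap.ker A.mulVecLin ⊔ LinearMap.ker X.mulVecLin)
  rw [Matrix.rank]
  omega

theorem stmt15_general {N η ζ : ℕ} (Γ : Matrix (Fin N) (Fin N) ℂ)
    (hker : Module.finrank ℂ (LinearMap.ker Γ.mulVecLin) = ζ)
    (B : Matrix (Fin N) (Fin η) ℂ) (C : Matrix (Fin η) (Fin η) ℂ)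
    (hη : η ≤ ζ)
    (hinv : IsUnit (Γ - B * C⁻¹ * Bᴴ)) :
    η = ζ ∧ (B * C⁻¹ * Bᴴ).rank = ζ := by
  have hle : (B * C⁻¹ * Bᴴ).rank ≤ η :=
    (Matrix.rank_mul_le_left _ _).trans <| (Matrix.rank_mul_le_left _ _).trans B.rank_le_width
  have hge : ζ ≤ (B * C⁻¹ * Bᴴ).rank := hker ▸ Matrix.finrank_ker_le_rank_of_isUnit_sub hinv
  omega

/-- if Γ is Hermitian with ζ-dimensional kernel, C is invertible
Hermitian of size η ≤ ζ, and Γ - BC⁻¹B* is invertible, then η = ζ and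
rank(BC⁻¹B*) = ζ. -/
theorem stmt15 {N η ζ : ℕ} (Γ : Matrix (Fin N) (Fin N) ℂ) (hΓ : Γ.IsHermitian)
    (hker : Module.finrank ℂ (LinearMap.ker Γ.mulVecLin) = ζ)
    (B : Matrix (Fin N) (Fin η) ℂ) (C : Matrix (Fin η) (Fin η) ℂ)
    (hC : C.IsHermitian) (hCinv : IsUnit C) (hη : η ≤ ζ)
    (hinv : IsUnit (Γ - B * C⁻¹ * Bᴴ)) :
    η = ζ ∧ (B * C⁻¹ * Bᴴ).rank = ζ :=
  stmt15_general Γ hker B C hη hinv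
end
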